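/- Let α, β, β′, γ ∈ ℝ with α > 0, β′ > 0, γ − α > 0, γ − β′ > 0 and γ − α − β′ > 0, and let x ∈ (−1, 1). Then Appell's function evaluated at second argument 1 satisfies F₁(α, β, β′; γ; x, 1) = (Γ(γ)Γ(γ−α−β′)/(Γ(γ−α)Γ(γ−β′))) · F(α, β; γ−β′; x), where the double series defining F₁(α,β,β′;γ;x,1) converges under the stated hypotheses. -/

import Mathlib

/-- The Pochhammer symbol `(q)_k = q(q+1)⋯(q+k−1)`. -/
noncomputable def poch (q : ℝ) (k : ℕ) : ℝ := ∏ i ∈ Finset.range k, (q + (i : ℝ))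

/-- The Gauss hypergeometric series `F(a,b;c;x) = Σ_n (a)_n (b)_n / ((c)_n n!) xⁿ`. -/
noncomputable def gaussF (a b c x : ℝ) : ℝ :=
  ∑' n : ℕ, poch a n * poch b n / (poch c n * (n.factorial : ℝ)) * x ^ n

/-- Appell's first hypergeometric series
`F₁(α,β,β′;γ;x,y) = Σ_{m,n} (α)_{m+n}(β)_m(β′)_n/((γ)_{m+n} m! n!) x^m y^n`. -/
noncomputable def appellF1 (α β β' γ x y : ℝ) : ℝ :=
  ∑' p : ℕ × ℕ,
    poch α (p.1 + p.2) * poch β p.1 * poch β' p.2 /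
        (poch γ (p.1 + p.2) * (p.1.factorial : ℝ) * (p.2.factorial : ℝ)) *
      x ^ p.1 * y ^ p.2

/-!
Write `K = Γ(γ)Γ(γ-α-β')/(Γ(γ-α)Γ(γ-β'))`. Since `(α)_{m+n} = (α)_m (α+m)_n` and likewise for
`γ`, the `m`-th row of the double series is `(α)_m(β)_m/((γ)_m m!) xᵐ` times the Gauss series
`F(α+m, β'; γ+m; 1)`, which Gauss's summation theorem evaluates to
`Γ(γ+m)Γ(γ-α-β')/(Γ(γ-α)Γ(γ+m-β')) = K (γ)_m/(γ-β')_m`; the row sums are therefore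
`K (α)_m(β)_m/((γ-β')_m m!) xᵐ`, and they add up to `K F(α,β;γ-β';x)`. Replacing `β, x` by
`|β|, |x|` gives a nonnegative majorant whose row sums are summable, hence absolute convergence.

Gauss's theorem `F(a,b;c;1) = Γ(c)Γ(c-a-b)/(Γ(c-a)Γ(c-b))` comes from Euler's integral: expand
`(1-t)^{-b}` as a binomial series in `∫₀¹ t^{a-1}(1-t)^{c-a-b-1} dt` and integrate termwise
against Beta integrals. Working with lower Lebesgue integrals, the interchange is monotone
convergence, which also yields the convergence of the Gauss series at `1`.
-/

open Filter Finset MeasureTheory Set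

lemma poch_succ (q : ℝ) (k : ℕ) : poch q (k + 1) = poch q k * (q + k) :=
  prod_range_succ _ _

lemma poch_add (q : ℝ) (m n : ℕ) : poch q (m + n) = poch q m * poch (q + m) n := by
  simp only [poch, prod_range_add, Nat.cast_add, add_assoc]

lemma poch_pos {q : ℝ} (hq : 0 < q) (k : ℕ) : 0 < poch q k :=
  prod_pos fun _ _ => by positivity

lemma poch_nonneg {q : ℝ} (hq : 0 ≤ q) (k : ℕ) : 0 ≤ poch q k :=
  prod_nonneg fun _ _ => by positivity

lemma poch_le_poch {q r : ℝ} (hq : 0 ≤ q) (hqr : q ≤ r) (k : ℕ) : poch q k ≤ poch r k :=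
  prod_le_prod (fun _ _ => by positivity) fun _ _ => by linarith

lemma abs_poch_le (q : ℝ) (k : ℕ) : |poch q k| ≤ poch |q| k := by
  rw [poch, poch, abs_prod]
  exact prod_le_prod (fun _ _ => abs_nonneg _) fun i _ =>
    (abs_add_le _ _).trans_eq (by rw [Nat.abs_cast])

lemma Gamma_add_nat_eq_poch_mul_Gamma {a : ℝ} (ha : 0 < a) (n : ℕ) :
    Real.Gamma (a + n) = poch a n * Real.Gamma a := by
  induction n with
  | zero => simp [poch]
  | succ n ih =>
    rw [Nat.cast_succ, ← add_assoc, Real.Gamma_add_one (by positivity), ih, poch_succ]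
    ring

lemma poch_eq_ascPochhammer_eval (q : ℝ) (k : ℕ) : poch q k = (ascPochhammer ℝ k).eval q := by
  induction k with
  | zero => simp [poch]
  | succ k ih => rw [poch_succ, ih, ascPochhammer_succ_eval]

lemma choose_add_sub_one_eq_poch_div_factorial (b : ℝ) (n : ℕ) :
    Ring.choose (b + n - 1) n = poch b n / n.factorial := by
  rw [Ring.choose_eq_smul, Polynomial.descPochhammer_smeval_eq_ascPochhammer,
    Polynomial.ascPochhammer_smeval_eq_eval, poch_eq_ascPochhammer_eval, smul_eq_mul,
    div_eq_inv_mul]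
  ring_nf

lemma hasSum_poch_div_factorial_mul_pow (b : ℝ) {t : ℝ} (ht : |t| < 1) :
    HasSum (fun n : ℕ => poch b n / n.factorial * t ^ n) ((1 - t) ^ (-b)) := by
  have h := (Real.one_div_one_sub_rpow_hasFPowerSeriesOnBall_zero b).hasSum
    (y := t) (by simpa [enorm_eq_nnnorm, ← NNReal.coe_lt_one, ← Real.norm_eq_abs] using ht)
  simpa [FormalMultilinearSeries.ofScalars_apply_eq, choose_add_sub_one_eq_poch_div_factorial,
    Real.rpow_neg (sub_nonneg.2 (abs_lt.1 ht).2.le), mul_comm] using h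

lemma ofReal_rpow_mul_one_sub_rpow {p q x : ℝ} (hx : x ∈ Icc (0 : ℝ) 1) :
    ((x ^ (p - 1) * (1 - x) ^ (q - 1) : ℝ) : ℂ) =
      (x : ℂ) ^ ((p : ℂ) - 1) * (1 - (x : ℂ)) ^ ((q : ℂ) - 1) := by
  rw [Complex.ofReal_mul, Complex.ofReal_cpow hx.1, Complex.ofReal_cpow (sub_nonneg.2 hx.2)]
  push_cast
  rfl

lemma integrableOn_rpow_mul_one_sub_rpow {p q : ℝ} (hp : 0 < p) (hq : 0 < q) :
    IntegrableOn (fun t : ℝ => t ^ (p - 1) * (1 - t) ^ (q - 1)) (Ioo 0 1) := by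
  have h : IntegrableOn (fun x : ℝ => ‖(x : ℂ) ^ ((p : ℂ) - 1) * (1 - (x : ℂ)) ^ ((q : ℂ) - 1)‖)
      (Ioc 0 1) := ((intervalIntegrable_iff_integrableOn_Ioc_of_le zero_le_one).1
    (Complex.betaIntegral_convergent (by simpa) (by simpa))).norm
  refine (h.mono_set Ioo_subset_Ioc_self).congr_fun (fun x hx => ?_) measurableSet_Ioo
  dsimp only
  rw [← ofReal_rpow_mul_one_sub_rpow (Ioo_subset_Icc_self hx), Complex.norm_real,
    Real.norm_of_nonneg (by have := hx.1; have := hx.2; positivity)]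

lemma integral_rpow_mul_one_sub_rpow {p q : ℝ} (hp : 0 < p) (hq : 0 < q) :
    ∫ t in Ioo (0 : ℝ) 1, t ^ (p - 1) * (1 - t) ^ (q - 1) =
      Real.Gamma p * Real.Gamma q / Real.Gamma (p + q) := by
  apply Complex.ofReal_injective
  rw [← integral_complex_ofReal, setIntegral_congr_fun measurableSet_Ioo
      (fun x hx => ofReal_rpow_mul_one_sub_rpow (Ioo_subset_Icc_self hx)),
    ← integral_Ioc_eq_integral_Ioo, ← intervalIntegral.integral_of_le zero_le_one]
  push_cast
  rw [← Complex.betaIntegral, Complex.betaIntegral_eq_Gamma_mul_div _ _ (by simpa) (by simpa),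
    Complex.Gamma_ofReal, Complex.Gamma_ofReal, ← Complex.ofReal_add, Complex.Gamma_ofReal]

lemma lintegral_ofReal_rpow_mul_one_sub_rpow {p q : ℝ} (hp : 0 < p) (hq : 0 < q) :
    ∫⁻ t in Ioo (0 : ℝ) 1, ENNReal.ofReal (t ^ (p - 1) * (1 - t) ^ (q - 1)) =
      ENNReal.ofReal (Real.Gamma p * Real.Gamma q / Real.Gamma (p + q)) := by
  rw [← integral_rpow_mul_one_sub_rpow hp hq, ofReal_integral_eq_lintegral_ofReal
    (integrableOn_rpow_mul_one_sub_rpow hp hq)]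
  filter_upwards [ae_restrict_mem measurableSet_Ioo] with t ht
  have := ht.1; have := ht.2
  positivity

lemma hasSum_of_tsum_ofReal_eq {ι : Type*} {u : ι → ℝ} {s : ℝ} (hu : ∀ i, 0 ≤ u i) (hs : 0 ≤ s)
    (h : ∑' i, ENNReal.ofReal (u i) = ENNReal.ofReal s) : HasSum u s := by
  have := ENNReal.hasSum_toReal (h ▸ ENNReal.ofReal_ne_top)
  rw [← ENNReal.tsum_toReal_eq fun _ => ENNReal.ofReal_ne_top, h, ENNReal.toReal_ofReal hs]
    at this
  simpa only [ENNReal.toReal_ofReal (hu _)] using this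

noncomputable def gaussTerm (a b c x : ℝ) (n : ℕ) : ℝ :=
  poch a n * poch b n / (poch c n * n.factorial) * x ^ n

lemma gaussTerm_nonneg {a b c x : ℝ} (ha : 0 ≤ a) (hb : 0 ≤ b) (hc : 0 ≤ c) (hx : 0 ≤ x)
    (n : ℕ) : 0 ≤ gaussTerm a b c x n := by
  have := poch_nonneg ha n; have := poch_nonneg hb n; have := poch_nonneg hc n
  unfold gaussTerm; positivity

lemma lintegral_binomial_term_mul_beta_integrand {a b c : ℝ} (ha : 0 < a) (hb : 0 ≤ b)
    (hca : 0 < c - a) (n : ℕ) :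
    ∫⁻ t in Ioo 0 1, ENNReal.ofReal
        (poch b n / n.factorial * (t ^ (a + n - 1) * (1 - t) ^ (c - a - 1))) =
      ENNReal.ofReal
        (Real.Gamma a * Real.Gamma (c - a) / Real.Gamma c * gaussTerm a b c 1 n) := by
  have hc : 0 < c := by linarith
  have hb_n : 0 ≤ poch b n / n.factorial := div_nonneg (poch_nonneg hb n) (Nat.cast_nonneg _)
  simp_rw [ENNReal.ofReal_mul hb_n]
  rw [lintegral_const_mul' _ _ ENNReal.ofReal_ne_top,
    lintegral_ofReal_rpow_mul_one_sub_rpow (by positivity) hca, ← ENNReal.ofReal_mul hb_n,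
    show a + n + (c - a) = c + n by ring, Gamma_add_nat_eq_poch_mul_Gamma ha,
    Gamma_add_nat_eq_poch_mul_Gamma hc]
  have := poch_pos hc n
  have := Real.Gamma_pos_of_pos hc
  congr 1
  unfold gaussTerm
  rw [one_pow, mul_one]
  field_simp

lemma hasSum_binomial_term_mul_beta_integrand (a b c : ℝ) {t : ℝ} (ht : t ∈ Ioo (0 : ℝ) 1) :
    HasSum (fun n : ℕ => poch b n / n.factorial * (t ^ (a + n - 1) * (1 - t) ^ (c - a - 1)))
      (t ^ (a - 1) * (1 - t) ^ (c - a - b - 1)) := by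
  have h := (hasSum_poch_div_factorial_mul_pow b (abs_lt.2 ⟨by linarith [ht.1], ht.2⟩)).mul_left
    (t ^ (a - 1) * (1 - t) ^ (c - a - 1))
  have h_term (n : ℕ) : t ^ (a - 1) * (1 - t) ^ (c - a - 1) * (poch b n / n.factorial * t ^ n) =
      poch b n / n.factorial * (t ^ (a + n - 1) * (1 - t) ^ (c - a - 1)) := by
    rw [show a + n - 1 = (a - 1) + n by ring, Real.rpow_add ht.1, Real.rpow_natCast]
    ring
  have h_sum : t ^ (a - 1) * (1 - t) ^ (c - a - 1) * (1 - t) ^ (-b) =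
      t ^ (a - 1) * (1 - t) ^ (c - a - b - 1) := by
    rw [mul_assoc, ← Real.rpow_add (sub_pos.2 ht.2)]
    ring_nf
  simpa only [h_term, h_sum] using h

theorem hasSum_gaussTerm_one {a b c : ℝ} (ha : 0 < a) (hb : 0 < b) (hcab : 0 < c - a - b) :
    HasSum (gaussTerm a b c 1)
      (Real.Gamma c * Real.Gamma (c - a - b) / (Real.Gamma (c - a) * Real.Gamma (c - b))) := by
  have hca : 0 < c - a := by linarith
  have hc : 0 < c := by linarith
  have := Real.Gamma_pos_of_pos ha; have := Real.Gamma_pos_of_pos hca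
  have := Real.Gamma_pos_of_pos hc; have := Real.Gamma_pos_of_pos hcab
  have : 0 < Real.Gamma (c - b) := Real.Gamma_pos_of_pos (by linarith)
  set K := Real.Gamma a * Real.Gamma (c - a) / Real.Gamma c
  have hK : 0 < K := by positivity
  have h_lintegral : ∑' n, ENNReal.ofReal (K * gaussTerm a b c 1 n) =
      ENNReal.ofReal (K * (Real.Gamma c * Real.Gamma (c - a - b) /
        (Real.Gamma (c - a) * Real.Gamma (c - b)))) := calc
    _ = ∑' n : ℕ, ∫⁻ t in Ioo 0 1, ENNReal.ofReal
          (poch b n / n.factorial * (t ^ (a + n - 1) * (1 - t) ^ (c - a - 1))) :=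
      tsum_congr fun n => (lintegral_binomial_term_mul_beta_integrand ha hb.le hca n).symm
    _ = ∫⁻ t in Ioo 0 1, ∑' n : ℕ, ENNReal.ofReal
          (poch b n / n.factorial * (t ^ (a + n - 1) * (1 - t) ^ (c - a - 1))) :=
      (lintegral_tsum fun n => by fun_prop).symm
    _ = ∫⁻ t in Ioo 0 1, ENNReal.ofReal (t ^ (a - 1) * (1 - t) ^ (c - a - b - 1)) := by
      refine setLIntegral_congr_fun measurableSet_Ioo fun t ht => ?_
      have h := hasSum_binomial_term_mul_beta_integrand a b c ht
      rw [← ENNReal.ofReal_tsum_of_nonneg (fun n => ?_) h.summable, h.tsum_eq]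
      have := poch_nonneg hb.le n; have := ht.1; have := ht.2
      positivity
    _ = ENNReal.ofReal (Real.Gamma a * Real.Gamma (c - a - b) / Real.Gamma (c - b)) := by
      rw [lintegral_ofReal_rpow_mul_one_sub_rpow ha hcab]
      ring_nf
    _ = _ := by
      congr 1
      unfold K
      field_simp
  exact (hasSum_mul_left_iff hK.ne').1 <| hasSum_of_tsum_ofReal_eq
    (fun n => mul_nonneg hK.le (gaussTerm_nonneg ha.le hb.le hc.le zero_le_one n))
    (by positivity) h_lintegral

lemma abs_gaussTerm_le {a c : ℝ} (ha : 0 ≤ a) (hc : 0 ≤ c) (b x : ℝ) (n : ℕ) :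
    |gaussTerm a b c x n| ≤ gaussTerm a |b| c |x| n := by
  have := poch_nonneg ha n; have := poch_nonneg hc n
  unfold gaussTerm
  rw [abs_mul, abs_div, abs_mul, abs_mul, abs_pow, abs_of_nonneg (poch_nonneg ha n),
    abs_of_nonneg (poch_nonneg hc n), Nat.abs_cast]
  gcongr
  exact abs_poch_le b n

lemma gaussTerm_le {a b c t : ℝ} (ha : 0 < a) (hac : a ≤ c) (hb : 0 ≤ b) (ht : 0 ≤ t) (n : ℕ) :
    gaussTerm a b c t n ≤ poch b n / n.factorial * t ^ n := by
  have := poch_pos (ha.trans_le hac) n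
  have := poch_nonneg hb n
  unfold gaussTerm
  rw [mul_div_mul_comm]
  gcongr
  refine mul_le_of_le_one_left (by positivity) ?_
  exact div_le_one_of_le₀ (poch_le_poch ha.le hac n) (poch_nonneg (ha.le.trans hac) n)

lemma summable_gaussTerm {a c t : ℝ} (ha : 0 < a) (hac : a ≤ c) (b : ℝ) (ht : |t| < 1) :
    Summable (gaussTerm a b c t) := by
  refine Summable.of_norm_bounded
    (hasSum_poch_div_factorial_mul_pow |b| (by rwa [abs_abs])).summable fun n => ?_
  exact (abs_gaussTerm_le ha.le (ha.le.trans hac) b t n).trans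
    (gaussTerm_le ha hac (abs_nonneg b) (abs_nonneg t) n)

noncomputable def appellF1Term (α β β' γ x y : ℝ) (p : ℕ × ℕ) : ℝ :=
  poch α (p.1 + p.2) * poch β p.1 * poch β' p.2 /
      (poch γ (p.1 + p.2) * (p.1.factorial : ℝ) * (p.2.factorial : ℝ)) * x ^ p.1 * y ^ p.2

lemma appellF1Term_one_eq_mul (α β β' γ x : ℝ) (m n : ℕ) :
    appellF1Term α β β' γ x 1 (m, n) =
      gaussTerm α β γ x m * gaussTerm (α + m) β' (γ + m) 1 n := by
  simp only [appellF1Term, gaussTerm, poch_add, one_pow]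
  ring

lemma appellF1Term_one_nonneg {α β β' γ x : ℝ} (hα : 0 ≤ α) (hβ : 0 ≤ β) (hβ' : 0 ≤ β')
    (hγ : 0 ≤ γ) (hx : 0 ≤ x) (p : ℕ × ℕ) : 0 ≤ appellF1Term α β β' γ x 1 p := by
  rw [appellF1Term_one_eq_mul]
  exact mul_nonneg (gaussTerm_nonneg hα hβ hγ hx _)
    (gaussTerm_nonneg (by positivity) hβ' (by positivity) zero_le_one _)

lemma abs_appellF1Term_one_le {α β' γ : ℝ} (hα : 0 ≤ α) (hβ' : 0 ≤ β') (hγ : 0 ≤ γ) (β x : ℝ)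
    (p : ℕ × ℕ) : |appellF1Term α β β' γ x 1 p| ≤ appellF1Term α |β| β' γ |x| 1 p := by
  rw [appellF1Term_one_eq_mul, appellF1Term_one_eq_mul, abs_mul,
    abs_of_nonneg (gaussTerm_nonneg (by positivity) hβ' (by positivity) zero_le_one _)]
  exact mul_le_mul_of_nonneg_right (abs_gaussTerm_le hα hγ β x _)
    (gaussTerm_nonneg (by positivity) hβ' (by positivity) zero_le_one _)

lemma hasSum_appellF1Term_one_fiber {α β' γ : ℝ} (hα : 0 < α) (hβ' : 0 < β')
    (hγαβ' : 0 < γ - α - β') (β x : ℝ) (m : ℕ) :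
    HasSum (fun n => appellF1Term α β β' γ x 1 (m, n))
      (Real.Gamma γ * Real.Gamma (γ - α - β') / (Real.Gamma (γ - α) * Real.Gamma (γ - β')) *
        gaussTerm α β (γ - β') x m) := by
  have hγ : 0 < γ := by linarith
  have hγα : 0 < γ - α := by linarith
  have hγβ' : 0 < γ - β' := by linarith
  have h := (hasSum_gaussTerm_one (a := α + m) (c := γ + m) (by positivity) hβ'
    (by linarith)).mul_left (gaussTerm α β γ x m)
  rw [show γ + m - (α + m) - β' = γ - α - β' by ring, show γ + m - (α + m) = γ - α by ring,
    show γ + m - β' = γ - β' + m by ring, Gamma_add_nat_eq_poch_mul_Gamma hγ,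
    Gamma_add_nat_eq_poch_mul_Gamma hγβ'] at h
  simp only [← appellF1Term_one_eq_mul] at h
  rw [h.summable.hasSum_iff, h.tsum_eq]
  have := poch_pos hγ m; have := poch_pos hγβ' m
  have := Real.Gamma_pos_of_pos hγ; have := Real.Gamma_pos_of_pos hγα
  have := Real.Gamma_pos_of_pos hγβ'
  unfold gaussTerm
  field_simp

theorem stmt_15_general (α β β' γ x : ℝ)
    (hα : 0 < α) (hβ' : 0 < β') (h3 : 0 < γ - α - β')
    (hx : x ∈ Set.Ioo (-1 : ℝ) 1) :
    Summable (fun p : ℕ × ℕ =>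
        poch α (p.1 + p.2) * poch β p.1 * poch β' p.2 /
            (poch γ (p.1 + p.2) * (p.1.factorial : ℝ) * (p.2.factorial : ℝ)) *
          x ^ p.1 * (1 : ℝ) ^ p.2)
    ∧ appellF1 α β β' γ x 1
        = Real.Gamma γ * Real.Gamma (γ - α - β') /
            (Real.Gamma (γ - α) * Real.Gamma (γ - β')) * gaussF α β (γ - β') x := by
  have hx' : |x| < 1 := abs_lt.2 hx
  have hγ : 0 ≤ γ := by linarith
  have h_majorant : Summable (appellF1Term α |β| β' γ |x| 1) := by
    refine (summable_prod_of_nonneg (appellF1Term_one_nonneg hα.le (abs_nonneg β) hβ'.le hγ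
      (abs_nonneg x))).2
      ⟨fun m => (hasSum_appellF1Term_one_fiber hα hβ' h3 |β| |x| m).summable, ?_⟩
    simp only [fun m => (hasSum_appellF1Term_one_fiber hα hβ' h3 |β| |x| m).tsum_eq]
    exact (summable_gaussTerm hα (by linarith) |β| (by rwa [abs_abs])).mul_left _
  have h_summable : Summable (appellF1Term α β β' γ x 1) :=
    h_majorant.of_norm_bounded (abs_appellF1Term_one_le hα.le hβ'.le hγ β x)
  refine ⟨h_summable, ?_⟩
  calc appellF1 α β β' γ x 1
      = ∑' m, Real.Gamma γ * Real.Gamma (γ - α - β') /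
          (Real.Gamma (γ - α) * Real.Gamma (γ - β')) * gaussTerm α β (γ - β') x m :=
        (h_summable.hasSum.prod_fiberwise
          (hasSum_appellF1Term_one_fiber hα hβ' h3 β x)).tsum_eq.symm
    _ = _ := tsum_mul_left

/-- Appell's `F₁` at second argument `1`:
the defining double series converges and
`F₁(α,β,β′;γ;x,1) = Γ(γ)Γ(γ−α−β′)/(Γ(γ−α)Γ(γ−β′)) · F(α,β;γ−β′;x)`. -/
theorem stmt_15 (α β β' γ x : ℝ)
    (hα : 0 < α) (hβ' : 0 < β') (h1 : 0 < γ - α) (h2 : 0 < γ - β') (h3 : 0 < γ - α - β')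
    (hx : x ∈ Set.Ioo (-1 : ℝ) 1) :
    Summable (fun p : ℕ × ℕ =>
        poch α (p.1 + p.2) * poch β p.1 * poch β' p.2 /
            (poch γ (p.1 + p.2) * (p.1.factorial : ℝ) * (p.2.factorial : ℝ)) *
          x ^ p.1 * (1 : ℝ) ^ p.2)
    ∧ appellF1 α β β' γ x 1
        = Real.Gamma γ * Real.Gamma (γ - α - β') /
            (Real.Gamma (γ - α) * Real.Gamma (γ - β')) * gaussF α β (γ - β') x :=
  stmt_15_general α β β' γ x hα hβ' h3 hx
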